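/- The trace norm of the realignment equals the sum of the operator Schmidt coefficients: if a bipartite matrix ρ on ℂ^{d_A} ⊗ ℂ^{d_B} admits an operator Schmidt decomposition ρ = Σ_{i=1}^r λ_i A_i ⊗ B_i with λ_i ≥ 0 and {A_i}, {B_i} orthonormal families with respect to the Hilbert–Schmidt inner product, then ‖R(ρ)‖_tr = Σ_{i=1}^r λ_i. -/

import Mathlib

/-!
Flattening `A_i` and `B_i` row by row into vectors `a_i`, `b_i`, the realignment becomes
`R(ρ) = ∑ λ_i a_i b_iᵀ = U D Vᵀ` with `D = diag λ` and `U`, `V` having orthonormal columns.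
Then `S = U D Uᴴ` is positive semidefinite with `S² = R(ρ) R(ρ)ᴴ`, so `S` is the square root
appearing in the trace norm, and `Tr S = Tr D = ∑ λ_i`.
-/

open Matrix Kronecker ComplexOrder

/-- Trace norm `‖X‖_tr = Tr √(X Xᴴ)`. -/
noncomputable def traceNorm {m n : Type*} [Fintype m] [Fintype n] [DecidableEq m]
    (X : Matrix m n ℂ) : ℝ :=
  ((((Matrix.posSemidef_self_mul_conjTranspose X).1.eigenvectorUnitary : Matrix m m ℂ) *
      diagonal (((↑) : ℝ → ℂ) ∘ Real.sqrt ∘ (Matrix.posSemidef_self_mul_conjTranspose X).1.eigenvalues) *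
      (star (Matrix.posSemidef_self_mul_conjTranspose X).1.eigenvectorUnitary : Matrix m m ℂ)).trace).re

/-- A density matrix: positive semidefinite with trace 1. -/
def IsDensityMatrix {n : Type*} [Fintype n] (ρ : Matrix n n ℂ) : Prop :=
  ρ.PosSemidef ∧ ρ.trace = 1

/-- The realignment map: `R(ρ)_{(i,j),(k,l)} = ρ_{(i,k),(j,l)}`. -/
def realign {dA dB : ℕ} (ρ : Matrix (Fin dA × Fin dB) (Fin dA × Fin dB) ℂ) :
    Matrix (Fin dA × Fin dA) (Fin dB × Fin dB) ℂ :=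
  fun p q => ρ (p.1, q.1) (p.2, q.2)

/-- Partial transpose on the second subsystem: `(ρ^{T₂})_{(i,k),(j,l)} = ρ_{(i,l),(j,k)}`. -/
def ptranspose2 {d : ℕ} (ρ : Matrix (Fin d × Fin d) (Fin d × Fin d) ℂ) :
    Matrix (Fin d × Fin d) (Fin d × Fin d) ℂ :=
  fun p q => ρ (p.1, q.2) (q.1, p.2)

/-- The swap (exchange) operator `F_{(i,k),(j,l)} = δ_{il} δ_{kj}`. -/
def swapOp (d : ℕ) : Matrix (Fin d × Fin d) (Fin d × Fin d) ℂ :=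
  fun p q => if p.1 = q.2 ∧ p.2 = q.1 then 1 else 0

/-- The unnormalized maximally entangled projector `(|Ω⟩⟨Ω|)_{(i,k),(j,l)} = δ_{ik} δ_{jl}`. -/
def omegaProj (d : ℕ) : Matrix (Fin d × Fin d) (Fin d × Fin d) ℂ :=
  fun p q => if p.1 = p.2 ∧ q.1 = q.2 then 1 else 0

/-- Separability: `ρ` is a finite convex combination of products of density matrices. -/
def IsSeparableState {dA dB : ℕ} (ρ : Matrix (Fin dA × Fin dB) (Fin dA × Fin dB) ℂ) : Prop :=
  ∃ (m : ℕ) (p : Fin m → ℝ) (σ : Fin m → Matrix (Fin dA) (Fin dA) ℂ)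
    (τ : Fin m → Matrix (Fin dB) (Fin dB) ℂ),
    (∀ k, 0 ≤ p k) ∧ (∑ k, p k = 1) ∧ (∀ k, IsDensityMatrix (σ k)) ∧
    (∀ k, IsDensityMatrix (τ k)) ∧ ρ = ∑ k, (p k : ℂ) • (σ k ⊗ₖ τ k)

section TraceNorm

open MatrixOrder

variable {m n r : Type*} [Fintype m] [Fintype n] [DecidableEq m]

theorem traceNorm_eq_re_trace_sqrt (X : Matrix m n ℂ) :
    traceNorm X = (CFC.sqrt (X * Xᴴ)).trace.re := by
  have hXX := posSemidef_self_mul_conjTranspose X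
  rw [CFC.sqrt_eq_real_sqrt _ hXX.nonneg, cfcₙ_eq_cfc, hXX.1.cfc_eq]
  rfl

theorem traceNorm_eq_re_trace_of_mul_self {S : Matrix m m ℂ} (hS : S.PosSemidef)
    {X : Matrix m n ℂ} (h : S * S = X * Xᴴ) : traceNorm X = S.trace.re := by
  rw [traceNorm_eq_re_trace_sqrt, ← h, CFC.sqrt_mul_self S hS.nonneg]

theorem traceNorm_mul_diagonal_mul_transpose [Fintype r] [DecidableEq r]
    {U : Matrix m r ℂ} {V : Matrix n r ℂ} (hU : Uᴴ * U = 1) (hV : Vᴴ * V = 1)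
    {σ : r → ℝ} (hσ : 0 ≤ σ) :
    traceNorm (U * diagonal (fun i => (σ i : ℂ)) * Vᵀ) = ∑ i, σ i := by
  set D := diagonal (fun i => (σ i : ℂ))
  have hD : D.PosSemidef := PosSemidef.diagonal fun i => Complex.zero_le_real.mpr (hσ i)
  have hVt : Vᵀ * Vᵀᴴ = 1 := by
    rw [transpose_conjTranspose, ← conjTranspose_transpose, ← transpose_mul, hV, transpose_one]
  have hsq : (U * D * Uᴴ) * (U * D * Uᴴ) = (U * D * Vᵀ) * (U * D * Vᵀ)ᴴ := by
    simp only [conjTranspose_mul, hD.1.eq, Matrix.mul_assoc]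
    rw [← Matrix.mul_assoc Uᴴ, hU, Matrix.one_mul, ← Matrix.mul_assoc Vᵀ, hVt, Matrix.one_mul]
  rw [traceNorm_eq_re_trace_of_mul_self (hD.mul_mul_conjTranspose_same U) hsq, trace_mul_cycle,
    hU, Matrix.one_mul, trace_diagonal, Complex.re_sum]
  simp only [Complex.ofReal_re]

end TraceNorm

section Realignment

variable {ι m n R : Type*}

/-- Column `i` is `vec (A i)ᵀ`: the row-major flattening, the index order used by `realign`. -/
def vecCols (A : ι → Matrix m n R) : Matrix (m × n) ι R :=
  of fun p i => A i p.1 p.2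

theorem conjTranspose_vecCols_mul_vecCols [Fintype m] [Fintype n] [Semiring R] [Star R]
    (A : ι → Matrix m n R) :
    (vecCols A)ᴴ * vecCols A = of fun i j => ((A i)ᴴ * A j).trace := by
  ext i j
  simp only [mul_apply, conjTranspose_apply, vecCols, of_apply, trace, diag,
    Fintype.sum_prod_type]
  exact Finset.sum_comm

theorem realign_sum_smul_kronecker {dA dB : ℕ} [Fintype ι] [DecidableEq ι] (c : ι → ℂ)
    (A : ι → Matrix (Fin dA) (Fin dA) ℂ) (B : ι → Matrix (Fin dB) (Fin dB) ℂ) :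
    realign (∑ i, c i • (A i ⊗ₖ B i)) = vecCols A * diagonal c * (vecCols B)ᵀ := by
  ext p q
  rw [mul_apply]
  simp only [realign, Matrix.sum_apply, Matrix.smul_apply, kroneckerMap_apply, mul_diagonal,
    transpose_apply, vecCols, of_apply, smul_eq_mul]
  exact Finset.sum_congr rfl fun i _ => by ring

end Realignment

/-- The trace norm of the realignment equals the sum of the operator Schmidt
coefficients. -/
theorem traceNorm_realign_eq_sum_schmidt_coeffs {dA dB : ℕ}
    (ρ : Matrix (Fin dA × Fin dB) (Fin dA × Fin dB) ℂ)
    (r : ℕ) (lam : Fin r → ℝ)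
    (A : Fin r → Matrix (Fin dA) (Fin dA) ℂ)
    (B : Fin r → Matrix (Fin dB) (Fin dB) ℂ)
    (hlam : ∀ i, 0 ≤ lam i)
    (hA : ∀ i j, ((A i)ᴴ * A j).trace = if i = j then 1 else 0)
    (hB : ∀ i j, ((B i)ᴴ * B j).trace = if i = j then 1 else 0)
    (hdec : ρ = ∑ i, (lam i : ℂ) • (A i ⊗ₖ B i)) :
    traceNorm (realign ρ) = ∑ i, lam i := by
  have hUA : (vecCols A)ᴴ * vecCols A = 1 := by
    ext i j
    rw [conjTranspose_vecCols_mul_vecCols, of_apply, hA, one_apply]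
  have hUB : (vecCols B)ᴴ * vecCols B = 1 := by
    ext i j
    rw [conjTranspose_vecCols_mul_vecCols, of_apply, hB, one_apply]
  rw [hdec, realign_sum_smul_kronecker]
  exact traceNorm_mul_diagonal_mul_transpose hUA hUB hlam
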